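/- Let (𝔛,d) be a complete separable metric space and ν a doubling Borel measure such that (𝔛,d,ν) supports a weak (1,1)-Poincaré inequality. Let Ω ⊆ 𝔛 be an open bounded regular domain with ν(∂Ω) = 0 such that (Ω,d,ν) supports a weak (1,1)-Poincaré inequality. Then the inner perimeter of Ω in 𝔛 equals the perimeter of Ω: P_+(Ω,𝔛) = |D1_Ω|_ν(𝔛). -/

import Mathlib

open MeasureTheory Metric Set Filter Topology ENNReal

noncomputable section

variable {X : Type*}

/-- The slope (local Lipschitz constant) of `u : X → ℝ` relative to the set `Ω`:
`|∇u|(x) = limsup_{y → x, y ∈ Ω, y ≠ x} |u y - u x| / d(y,x)` (with value `0` at points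
isolated in `Ω`). -/
def slopeWithin [MetricSpace X] (Ω : Set X) (u : X → ℝ) (x : X) : ℝ≥0∞ :=
  Filter.limsup (fun y => ENNReal.ofReal (|u y - u x| / dist y x)) (nhdsWithin x (Ω \ {x}))

/-- `u` is locally Lipschitz on `Ω`. -/
def LocLipschitzOn [MetricSpace X] (Ω : Set X) (u : X → ℝ) : Prop :=
  ∀ x ∈ Ω, ∃ K : NNReal, ∃ t ∈ nhdsWithin x Ω, LipschitzOnWith K u t

/-- `un → u` in `L¹(Ω, ν)`. -/
def TendstoL1 [MeasurableSpace X] (ν : Measure X) (Ω : Set X)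
    (un : ℕ → X → ℝ) (u : X → ℝ) : Prop :=
  Tendsto (fun n => ∫⁻ x in Ω, ENNReal.ofReal |un n x - u x| ∂ν) atTop (𝓝 0)

/-- The total variation `|Du|_ν(Ω)` of `u` on `Ω`, defined by relaxation of the integral of the
slope along locally Lipschitz approximations in `L¹(Ω,ν)`. -/
def totalVariationOn [MetricSpace X] [MeasurableSpace X] (ν : Measure X) (Ω : Set X)
    (u : X → ℝ) : ℝ≥0∞ :=
  sInf { V : ℝ≥0∞ | ∃ un : ℕ → X → ℝ, (∀ n, LocLipschitzOn Ω (un n)) ∧ TendstoL1 ν Ω un u ∧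
    V = Filter.liminf (fun n => ∫⁻ x in Ω, slopeWithin Ω (un n) x ∂ν) atTop }

/-- `u ∈ BV(Ω, d, ν)`. -/
def MemBV [MetricSpace X] [MeasurableSpace X] (ν : Measure X) (Ω : Set X) (u : X → ℝ) : Prop :=
  Integrable u (ν.restrict Ω) ∧ totalVariationOn ν Ω u < ⊤

/-- The `BV(Ω,d,ν)` norm: `‖u‖_{L¹(Ω,ν)} + |Du|_ν(Ω)`. -/
def bvNorm [MetricSpace X] [MeasurableSpace X] (ν : Measure X) (Ω : Set X) (u : X → ℝ) : ℝ≥0∞ :=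
  (∫⁻ x in Ω, ENNReal.ofReal |u x| ∂ν) + totalVariationOn ν Ω u

/-- The restriction of `ν` to `S` is a doubling measure on the metric space `(S, d)`. -/
def DoublingOn [MetricSpace X] [MeasurableSpace X] (ν : Measure X) (S : Set X) : Prop :=
  ∃ C : NNReal, 1 ≤ C ∧ ∀ x ∈ S, ∀ r : ℝ, 0 < r →
    0 < ν (S ∩ ball x (2 * r)) ∧ ν (S ∩ ball x (2 * r)) ≤ (C : ℝ≥0∞) * ν (S ∩ ball x r) ∧
      ν (S ∩ ball x r) < ⊤

/-- The metric speed `|γ̇|(t) = limsup_{τ → 0} d(γ(t+τ), γ t)/|τ|`. -/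
def metricSpeed [MetricSpace X] (γ : ℝ → X) (t : ℝ) : ℝ≥0∞ :=
  Filter.limsup (fun τ : ℝ => ENNReal.ofReal (dist (γ (t + τ)) (γ t) / |τ|)) (𝓝[≠] (0 : ℝ))

/-- `g` is an upper gradient of `u` on the metric space `(S, d)`: for every Lipschitz curve
`γ : [a,b] → S` one has `|u(γ b) - u(γ a)| ≤ ∫_a^b g(γ t) |γ̇|(t) dt`. -/
def IsUpperGradientOn [MetricSpace X] (S : Set X) (u : X → ℝ) (g : X → ℝ≥0∞) : Prop :=
  ∀ (a b : ℝ) (γ : ℝ → X), a ≤ b → (∃ K : NNReal, LipschitzOnWith K γ (Set.Icc a b)) →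
    Set.MapsTo γ (Set.Icc a b) S →
    ENNReal.ofReal |u (γ b) - u (γ a)| ≤ ∫⁻ t in Set.Icc a b, g (γ t) * metricSpeed γ t

/-- The metric measure space `(S, d, ν)` (with restricted distance and measure) supports a weak
`(1,1)`-Poincaré inequality. -/
def WeakPoincareOn [MetricSpace X] [MeasurableSpace X] (ν : Measure X) (S : Set X) : Prop :=
  ∃ C l : ℝ, 0 < C ∧ 1 ≤ l ∧ ∀ x ∈ S, ∀ r : ℝ, 0 < r →
    ∀ (u : X → ℝ) (g : X → ℝ≥0∞), Measurable u → Measurable g → IsUpperGradientOn S u g →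
      (∫⁻ y in S ∩ ball x r, ENNReal.ofReal |u y - ⨍ z in S ∩ ball x r, u z ∂ν| ∂ν) /
          ν (S ∩ ball x r) ≤
        ENNReal.ofReal (C * r) *
          ((∫⁻ y in S ∩ ball x (l * r), g y ∂ν) / ν (S ∩ ball x (l * r)))

/-- Codimension-one Hausdorff premeasure at scale `R`:
`inf { Σᵢ ν(B(xᵢ,rᵢ))/rᵢ : A ⊆ ⋃ᵢ B(xᵢ,rᵢ), 0 < rᵢ ≤ R }`. -/
def codimOneHPre [MetricSpace X] [MeasurableSpace X] (ν : Measure X) (R : ℝ) (A : Set X) :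
    ℝ≥0∞ :=
  ⨅ (c : ℕ → X × ℝ)
    (_ : (∀ i, 0 < (c i).2 ∧ (c i).2 ≤ R) ∧ A ⊆ ⋃ i, ball (c i).1 (c i).2),
    ∑' i, ν (ball (c i).1 (c i).2) / ENNReal.ofReal (c i).2

/-- The codimension-one Hausdorff measure `ℋ` associated to `ν`, as the limit (= supremum, by
antitonicity) of the premeasures as the scale `R → 0⁺`. -/
def codimOneH [MetricSpace X] [MeasurableSpace X] (ν : Measure X) (A : Set X) : ℝ≥0∞ :=
  ⨆ (R : ℝ) (_ : 0 < R), codimOneHPre ν R A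

/-- `P` holds at `ℋ`-a.e. point of `A`. -/
def HAEOn [MetricSpace X] [MeasurableSpace X] (ν : Measure X) (A : Set X) (P : X → Prop) :
    Prop :=
  codimOneH ν {x ∈ A | ¬ P x} = 0

/-- The `L¹(A, ℋ)` norm `∫_A |f| dℋ` of `f`, as the Choquet (layer-cake) integral of `|f|`
over `A` against the codimension-one Hausdorff measure. -/
def hL1Norm [MetricSpace X] [MeasurableSpace X] (ν : Measure X) (A : Set X) (f : X → ℝ) :
    ℝ≥0∞ :=
  ∫⁻ t in Set.Ioi (0 : ℝ), codimOneH ν {x ∈ A | t < |f x|}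

/-- `c` is the trace of `u` at the point `x ∈ ∂Ω`:
`⨍_{Ω ∩ B(x,r)} |u - c| dν → 0` as `r → 0⁺`. -/
def IsTraceAt [MetricSpace X] [MeasurableSpace X] (ν : Measure X) (Ω : Set X) (u : X → ℝ)
    (x : X) (c : ℝ) : Prop :=
  Tendsto (fun r : ℝ =>
      (∫⁻ y in Ω ∩ ball x r, ENNReal.ofReal |u y - c| ∂ν) / ν (Ω ∩ ball x r))
    (𝓝[>] (0 : ℝ)) (𝓝 0)

/-- Standing assumptions on the domain `Ω`: open, bounded, supporting a weak `(1,1)`-Poincaré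
inequality, satisfying the measure density condition, with boundary Ahlfors codimension-one
regular. -/
def StandingAssumptions [MetricSpace X] [MeasurableSpace X] (ν : Measure X) (Ω : Set X) :
    Prop :=
  IsOpen Ω ∧ Bornology.IsBounded Ω ∧ WeakPoincareOn ν Ω ∧
  (∃ C : NNReal, 0 < C ∧ HAEOn ν (frontier Ω)
      (fun x => ∀ r : ℝ, 0 < r → r < Metric.diam Ω →
        (C : ℝ≥0∞) * ν (ball x r) ≤ ν (Ω ∩ ball x r))) ∧
  (∃ C : ℝ, 0 < C ∧ ∀ x ∈ frontier Ω, ∀ r : ℝ, 0 < r → r < Metric.diam Ω →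
      ν (ball x r) / ENNReal.ofReal r ≤ ENNReal.ofReal C * codimOneH ν (ball x r ∩ frontier Ω) ∧
      codimOneH ν (ball x r ∩ frontier Ω) ≤ ENNReal.ofReal C * (ν (ball x r) / ENNReal.ofReal r))

/-- The traces of `u` and `v` on `∂Ω` exist and coincide `ℋ`-a.e. -/
def SameTrace [MetricSpace X] [MeasurableSpace X] (ν : Measure X) (Ω : Set X) (u v : X → ℝ) :
    Prop :=
  HAEOn ν (frontier Ω) (fun x => ∃ c : ℝ, IsTraceAt ν Ω u x c ∧ IsTraceAt ν Ω v x c)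

/-- `u` is a function of least gradient in `Ω`: it minimises the total variation among all BV
functions with the same trace on `∂Ω`. -/
def IsLeastGradient [MetricSpace X] [MeasurableSpace X] (ν : Measure X) (Ω : Set X)
    (u : X → ℝ) : Prop :=
  MemBV ν Ω u ∧ ∀ v : X → ℝ, MemBV ν Ω v → SameTrace ν Ω u v →
    totalVariationOn ν Ω u ≤ totalVariationOn ν Ω v

/-- `Ω_t = { x ∈ Ω : dist(x, Ωᶜ) ≥ t }`. -/
def innerSet [MetricSpace X] (Ω : Set X) (t : ℝ) : Set X :=
  {x ∈ Ω | t ≤ Metric.infDist x Ωᶜ}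

/-- `Ω` is a regular domain: an open set of finite perimeter with
`|D1_Ω|_ν(X) = limsup_{t→0⁺} ν(Ω ∖ Ω_t)/t`. -/
def IsRegularDomain [MetricSpace X] [MeasurableSpace X] (ν : Measure X) (Ω : Set X) : Prop :=
  IsOpen Ω ∧ MemBV ν Set.univ (Ω.indicator fun _ => (1 : ℝ)) ∧
  totalVariationOn ν Set.univ (Ω.indicator fun _ => (1 : ℝ)) =
    Filter.limsup (fun t : ℝ => ν (Ω \ innerSet Ω t) / ENNReal.ofReal t) (𝓝[>] (0 : ℝ))

/-- The defining sequence `φ_t^Ω` of a regular domain: `0` outside `Ω`, `dist(x,Ωᶜ)/t` on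
`Ω ∖ Ω_t` and `1` on `Ω_t`. -/
def definingSeq [MetricSpace X] (Ω : Set X) (t : ℝ) : X → ℝ :=
  Ω.indicator fun x => min 1 (Metric.infDist x Ωᶜ / t)

/-- The inner perimeter `P₊(Ω, U)`. -/
def innerPerimeter [MetricSpace X] [MeasurableSpace X] (ν : Measure X) (Ω U : Set X) : ℝ≥0∞ :=
  sInf { V : ℝ≥0∞ | ∃ ψ : ℕ → X → ℝ, (∀ n, LocLipschitzOn U (ψ n)) ∧
    TendstoL1 ν U ψ (Ω.indicator fun _ => (1 : ℝ)) ∧ (∀ n, ∀ x ∈ U \ Ω, ψ n x = 0) ∧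
    V = Filter.liminf (fun n => ∫⁻ x in U, slopeWithin U (ψ n) x ∂ν) atTop }

/-!
Competitors for `P₊(Ω, X)` are competitors for `|D1_Ω|_ν(X)`, so only `P₊ ≤ |D1_Ω|` needs proof.
The defining functions `φ_t = min(1, dist(·, Ωᶜ)/t)` vanish off `Ω`, are `1/t`-Lipschitz and
tend to `1_Ω` in `L¹` as `t → 0⁺`. Their slope vanishes off `closure Ω ∩ {dist(·, Ωᶜ) ≤ t}`,
which up to the null set `∂Ω` lies in `Ω ∖ Ω_s` for every `s > t`, so
`∫ |∇φ_t| dν ≤ (s/t) · ν(Ω ∖ Ω_s)/s`. Letting `t < s → 0⁺` with `s/t → 1`, the regularity of `Ω`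
bounds the `liminf` of these integrals by `|D1_Ω|_ν(X)`.
-/

section Slope

variable [MetricSpace X] {Ω : Set X} {u : X → ℝ}

lemma slopeWithin_le_of_lipschitzWith {K : NNReal} (hu : LipschitzWith K u) (x : X) :
    slopeWithin Ω u x ≤ K := by
  refine limsup_le_of_le (by isBoundedDefault) ?_
  filter_upwards [self_mem_nhdsWithin] with y hy
  have hle : |u y - u x| / dist y x ≤ K := by
    rw [div_le_iff₀ (dist_pos.2 hy.2)]
    simpa [Real.dist_eq] using hu.dist_le_mul y x
  simpa using ENNReal.ofReal_le_ofReal hle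

lemma slopeWithin_eq_zero_of_eventually_eq {x : X} (h : ∀ᶠ y in 𝓝 x, u y = u x) :
    slopeWithin Ω u x = 0 := by
  refine le_antisymm (limsup_le_of_le (by isBoundedDefault) ?_) bot_le
  filter_upwards [eventually_nhdsWithin_of_eventually_nhds h] with y hy
  simp [hy]

end Slope

section DefiningSeq

variable [MetricSpace X] {Ω : Set X} {s t : ℝ}

lemma definingSeq_eq_min (t : ℝ) :
    definingSeq Ω t = fun x => min 1 (infDist x Ωᶜ / t) := by
  funext x
  by_cases hx : x ∈ Ω
  · simp [definingSeq, hx]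
  · simp [definingSeq, hx, infDist_zero_of_mem (show x ∈ Ωᶜ from hx)]

lemma definingSeq_eq_one (ht : 0 < t) {x : X} (hx : t ≤ infDist x Ωᶜ) :
    definingSeq Ω t x = 1 := by
  rw [definingSeq_eq_min]
  exact min_eq_left ((one_le_div ht).2 hx)

lemma definingSeq_mem_Icc (ht : 0 < t) (x : X) : definingSeq Ω t x ∈ Icc 0 1 := by
  rw [definingSeq_eq_min]
  exact ⟨le_min zero_le_one (div_nonneg infDist_nonneg ht.le), min_le_left _ _⟩

lemma lipschitzWith_definingSeq (ht : 0 < t) :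
    LipschitzWith (Real.toNNReal t⁻¹) (definingSeq Ω t) := by
  have hdiv : LipschitzWith (Real.toNNReal t⁻¹) (fun x => infDist x Ωᶜ / t) := by
    refine LipschitzWith.of_dist_le_mul fun x y => ?_
    have h := (lipschitz_infDist_pt Ωᶜ).dist_le_mul x y
    rw [Real.dist_eq] at h ⊢
    rw [← sub_div, abs_div, abs_of_pos ht, Real.coe_toNNReal _ (inv_nonneg.2 ht.le),
      div_eq_inv_mul]
    simp only [NNReal.coe_one, one_mul] at h
    exact mul_le_mul_of_nonneg_left h (inv_nonneg.2 ht.le)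
  rw [definingSeq_eq_min]
  exact hdiv.const_min 1

lemma slopeWithin_definingSeq_eq_zero (ht : 0 < t) {U : Set X} {x : X}
    (hx : x ∉ closure Ω ∩ {y | infDist y Ωᶜ ≤ t}) :
    slopeWithin U (definingSeq Ω t) x = 0 := by
  apply slopeWithin_eq_zero_of_eventually_eq
  rcases not_and_or.1 hx with hx | hx
  · have hxΩ : x ∉ Ω := fun h => hx (subset_closure h)
    filter_upwards [isClosed_closure.isOpen_compl.mem_nhds hx] with y hy
    have hyΩ : y ∉ Ω := fun h => hy (subset_closure h)
    simp [definingSeq, hxΩ, hyΩ]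
  · have hxt : t < infDist x Ωᶜ := lt_of_not_ge hx
    filter_upwards [(isOpen_lt continuous_const (continuous_infDist_pt _)).mem_nhds hxt]
      with y hy
    rw [definingSeq_eq_one ht hy.le, definingSeq_eq_one ht hxt.le]

lemma closure_inter_infDist_le_subset (hΩ : IsOpen Ω) (hts : t < s) :
    closure Ω ∩ {y | infDist y Ωᶜ ≤ t} ⊆ frontier Ω ∪ (Ω \ innerSet Ω s) := by
  rintro x ⟨hxc, hxt⟩
  by_cases hxΩ : x ∈ Ω
  · exact Or.inr ⟨hxΩ, fun hxs => (hts.trans_le (hxs.2.trans hxt)).false⟩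
  · exact Or.inl ⟨hxc, by rwa [hΩ.interior_eq]⟩

lemma abs_definingSeq_sub_indicator_le (ht : 0 < t) (x : X) :
    |definingSeq Ω t x - Ω.indicator (fun _ => (1 : ℝ)) x| ≤
      (Ω \ innerSet Ω t).indicator (fun _ => 1) x := by
  by_cases hxΩ : x ∈ Ω
  · by_cases hxt : t ≤ infDist x Ωᶜ
    · have hx : x ∉ Ω \ innerSet Ω t := fun h => h.2 ⟨hxΩ, hxt⟩
      simp [definingSeq_eq_one ht hxt, hxΩ, hx]
    · have hx : x ∈ Ω \ innerSet Ω t := ⟨hxΩ, fun h => hxt h.2⟩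
      obtain ⟨h0, h1⟩ := definingSeq_mem_Icc (Ω := Ω) ht x
      rw [indicator_of_mem hxΩ, indicator_of_mem hx, abs_sub_comm, abs_of_nonneg (by linarith)]
      linarith
  · simp [definingSeq, hxΩ]

variable [MeasurableSpace X] (ν : Measure X)

lemma lintegral_slopeWithin_definingSeq_le (hΩ : IsOpen Ω) (hnull : ν (frontier Ω) = 0)
    (ht : 0 < t) (hts : t < s) :
    ∫⁻ x in univ, slopeWithin univ (definingSeq Ω t) x ∂ν ≤
      ENNReal.ofReal (s / t) * (ν (Ω \ innerSet Ω s) / ENNReal.ofReal s) := by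
  set B := closure Ω ∩ {y | infDist y Ωᶜ ≤ t}
  have hslope : ∀ x,
      slopeWithin univ (definingSeq Ω t) x ≤ B.indicator (fun _ => .ofReal t⁻¹) x := by
    intro x
    by_cases hx : x ∈ B
    · rw [indicator_of_mem hx]
      exact slopeWithin_le_of_lipschitzWith (lipschitzWith_definingSeq ht) x
    · rw [indicator_of_notMem hx, slopeWithin_definingSeq_eq_zero ht hx]
  have hB : ν B ≤ ν (Ω \ innerSet Ω s) := calc
    ν B ≤ ν (frontier Ω ∪ (Ω \ innerSet Ω s)) :=
      measure_mono (closure_inter_infDist_le_subset hΩ hts)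
    _ ≤ ν (Ω \ innerSet Ω s) := by
      simpa [hnull] using measure_union_le (μ := ν) (frontier Ω) (Ω \ innerSet Ω s)
  have hs : ENNReal.ofReal s ≠ 0 := by simpa using ht.trans hts
  calc ∫⁻ x in univ, slopeWithin univ (definingSeq Ω t) x ∂ν
      ≤ ∫⁻ x, B.indicator (fun _ => .ofReal t⁻¹) x ∂ν := by
        rw [Measure.restrict_univ]; exact lintegral_mono hslope
    _ ≤ .ofReal t⁻¹ * ν (Ω \ innerSet Ω s) :=
        (lintegral_indicator_const_le _ _).trans (mul_le_mul_right hB _)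
    _ = ENNReal.ofReal (s / t) * (ν (Ω \ innerSet Ω s) / ENNReal.ofReal s) := by
        rw [div_eq_mul_inv s, ENNReal.ofReal_mul (ht.trans hts).le, mul_comm (ENNReal.ofReal s),
          mul_assoc, ENNReal.mul_div_cancel hs ENNReal.ofReal_ne_top]

lemma lintegral_abs_definingSeq_sub_indicator_le (ht : 0 < t) :
    ∫⁻ x in univ, ENNReal.ofReal |definingSeq Ω t x - Ω.indicator (fun _ => (1 : ℝ)) x| ∂ν ≤
      ν (Ω \ innerSet Ω t) := calc
  _ ≤ ∫⁻ x, (Ω \ innerSet Ω t).indicator (fun _ => 1) x ∂ν := by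
      rw [Measure.restrict_univ]
      refine lintegral_mono fun x => ?_
      refine (ENNReal.ofReal_le_ofReal
        (abs_definingSeq_sub_indicator_le (Ω := Ω) ht x)).trans_eq ?_
      by_cases hx : x ∈ Ω \ innerSet Ω t <;> simp [hx]
  _ ≤ ν (Ω \ innerSet Ω t) := by
      simpa using lintegral_indicator_const_le (μ := ν) (Ω \ innerSet Ω t) 1

end DefiningSeq

section RegularDomain

variable [MetricSpace X] [MeasurableSpace X] {ν : Measure X} {Ω : Set X}

lemma totalVariationOn_indicator_le_innerPerimeter (U : Set X) :
    totalVariationOn ν U (Ω.indicator fun _ => (1 : ℝ)) ≤ innerPerimeter ν Ω U :=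
  sInf_le_sInf fun _ ⟨ψ, hψ, hL1, _, hV⟩ => ⟨ψ, hψ, hL1, hV⟩

lemma innerPerimeter_univ_le_liminf_definingSeq {t : ℕ → ℝ} (ht : ∀ n, 0 < t n)
    (hν : Tendsto (fun n => ν (Ω \ innerSet Ω (t n))) atTop (𝓝 0)) :
    innerPerimeter ν Ω univ ≤
      liminf (fun n => ∫⁻ x in univ, slopeWithin univ (definingSeq Ω (t n)) x ∂ν) atTop := by
  refine sInf_le ⟨fun n => definingSeq Ω (t n), fun n x _ => ?_, ?_, fun n x hx => ?_, rfl⟩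
  · exact ⟨_, univ, univ_mem, (lipschitzWith_definingSeq (ht n)).lipschitzOnWith⟩
  · exact tendsto_of_tendsto_of_tendsto_of_le_of_le tendsto_const_nhds hν (fun _ => zero_le)
      fun n => lintegral_abs_definingSeq_sub_indicator_le ν (ht n)
  · exact indicator_of_notMem hx.2 _

lemma tendsto_measure_diff_innerSet_zero
    (hL : limsup (fun t => ν (Ω \ innerSet Ω t) / ENNReal.ofReal t) (𝓝[>] 0) ≠ ⊤)
    {t : ℕ → ℝ} (ht : Tendsto t atTop (𝓝[>] 0)) :
    Tendsto (fun n => ν (Ω \ innerSet Ω (t n))) atTop (𝓝 0) := by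
  set F := fun t => ν (Ω \ innerSet Ω t) / ENNReal.ofReal t
  have hF : ∀ᶠ n in atTop, ν (Ω \ innerSet Ω (t n)) = F (t n) * ENNReal.ofReal (t n) := by
    filter_upwards [(tendsto_nhdsWithin_iff.1 ht).2] with n hn
    exact (ENNReal.div_mul_cancel (by simpa using hn) ENNReal.ofReal_ne_top).symm
  have hF_le : limsup (F ∘ t) atTop ≤ limsup F (𝓝[>] 0) := ht.limsup_comp_le_limsup
  have hofReal : limsup (fun n => ENNReal.ofReal (t n)) atTop = 0 := by
    simpa using (ENNReal.tendsto_ofReal (tendsto_nhds_of_tendsto_nhdsWithin ht)).limsup_eq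
  refine tendsto_of_le_liminf_of_limsup_le zero_le ?_
  calc limsup (fun n => ν (Ω \ innerSet Ω (t n))) atTop
      = limsup ((F ∘ t) * fun n => ENNReal.ofReal (t n)) atTop := limsup_congr hF
    _ ≤ limsup (F ∘ t) atTop * limsup (fun n => ENNReal.ofReal (t n)) atTop :=
        ENNReal.limsup_mul_le' (by simp [hofReal]) (Or.inl (ne_top_of_le_ne_top hL hF_le))
    _ = 0 := by rw [hofReal, mul_zero]

lemma limsup_lintegral_slopeWithin_definingSeq_le (hΩ : IsOpen Ω) (hnull : ν (frontier Ω) = 0)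
    (hL : limsup (fun t => ν (Ω \ innerSet Ω t) / ENNReal.ofReal t) (𝓝[>] 0) ≠ ⊤)
    {s t : ℕ → ℝ} (ht : ∀ n, 0 < t n) (hts : ∀ n, t n < s n) (hs : Tendsto s atTop (𝓝[>] 0))
    (hst : Tendsto (fun n => s n / t n) atTop (𝓝 1)) :
    limsup (fun n => ∫⁻ x in univ, slopeWithin univ (definingSeq Ω (t n)) x ∂ν) atTop ≤
      limsup (fun t => ν (Ω \ innerSet Ω t) / ENNReal.ofReal t) (𝓝[>] 0) := by
  set F := fun t => ν (Ω \ innerSet Ω t) / ENNReal.ofReal t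
  have hF_le : limsup (F ∘ s) atTop ≤ limsup F (𝓝[>] 0) := hs.limsup_comp_le_limsup
  have hratio : limsup (fun n => ENNReal.ofReal (s n / t n)) atTop = 1 := by
    simpa using (ENNReal.tendsto_ofReal hst).limsup_eq
  calc limsup (fun n => ∫⁻ x in univ, slopeWithin univ (definingSeq Ω (t n)) x ∂ν) atTop
      ≤ limsup ((fun n => ENNReal.ofReal (s n / t n)) * (F ∘ s)) atTop :=
        limsup_le_limsup (.of_forall fun n =>
          lintegral_slopeWithin_definingSeq_le ν hΩ hnull (ht n) (hts n))
    _ ≤ limsup (fun n => ENNReal.ofReal (s n / t n)) atTop * limsup (F ∘ s) atTop :=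
        ENNReal.limsup_mul_le' (Or.inr (ne_top_of_le_ne_top hL hF_le)) (by simp [hratio])
    _ ≤ limsup F (𝓝[>] 0) := by rw [hratio, one_mul]; exact hF_le

end RegularDomain

theorem innerPerimeter_eq_perimeter_of_regular_general
    [MetricSpace X] [MeasurableSpace X] (ν : Measure X) (Ω : Set X)
    (hreg : IsRegularDomain ν Ω) (hnull : ν (frontier Ω) = 0) :
    innerPerimeter ν Ω Set.univ =
      totalVariationOn ν Set.univ (Ω.indicator fun _ => (1 : ℝ)) := by
  obtain ⟨hΩ, hBV, hper⟩ := hreg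
  refine le_antisymm ?_ (totalVariationOn_indicator_le_innerPerimeter univ)
  have hL : limsup (fun t => ν (Ω \ innerSet Ω t) / ENNReal.ofReal t) (𝓝[>] 0) ≠ ⊤ :=
    hper ▸ hBV.2.ne
  set s : ℕ → ℝ := fun n => 1 / ((n : ℝ) + 1)
  have hs : Tendsto s atTop (𝓝[>] 0) :=
    tendsto_nhdsWithin_iff.2 ⟨tendsto_one_div_add_atTop_nhds_zero_nat, .of_forall fun n => by
      simp only [s, mem_Ioi]; positivity⟩
  have hs_pos : ∀ n, 0 < s n := fun n => by positivity
  -- the slope of `φ_t` is controlled by `ν(Ω ∖ Ω_s)` only for `s > t`: take `t n = s (n + 1)`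
  have hst : ∀ n, s n / s (n + 1) = 1 + s n := fun n => by
    simp only [s]; push_cast; field_simp
  rw [hper]
  calc innerPerimeter ν Ω univ
      ≤ liminf (fun n => ∫⁻ x in univ, slopeWithin univ (definingSeq Ω (s (n + 1))) x ∂ν) atTop :=
        innerPerimeter_univ_le_liminf_definingSeq (fun n => hs_pos _)
          (tendsto_measure_diff_innerSet_zero hL (hs.comp (tendsto_add_atTop_nat 1)))
    _ ≤ limsup (fun n => ∫⁻ x in univ, slopeWithin univ (definingSeq Ω (s (n + 1))) x ∂ν) atTop :=
        liminf_le_limsup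
    _ ≤ _ := limsup_lintegral_slopeWithin_definingSeq_le hΩ hnull hL (fun n => hs_pos _)
        (fun n => by simp only [s]; gcongr; linarith) hs
        (by simpa [hst] using tendsto_const_nhds.add (tendsto_nhds_of_tendsto_nhdsWithin hs))

/-- for a regular domain `Ω`, the inner perimeter of `Ω` in `X` equals the
perimeter: `P₊(Ω, X) = |D1_Ω|_ν(X)`. -/
theorem innerPerimeter_eq_perimeter_of_regular
    [MetricSpace X] [CompleteSpace X] [TopologicalSpace.SeparableSpace X]
    [MeasurableSpace X] [BorelSpace X] (ν : Measure X) (Ω : Set X)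
    (hdoub : DoublingOn ν Set.univ) (hPI : WeakPoincareOn ν Set.univ)
    (hΩbd : Bornology.IsBounded Ω) (hreg : IsRegularDomain ν Ω)
    (hnull : ν (frontier Ω) = 0) (hPIΩ : WeakPoincareOn ν Ω) :
    innerPerimeter ν Ω Set.univ =
      totalVariationOn ν Set.univ (Ω.indicator fun _ => (1 : ℝ)) :=
  innerPerimeter_eq_perimeter_of_regular_general ν Ω hreg hnull

end
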